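/- arXiv:1111.4419 — 3 statements merged into one kernel-verified Lean document; each statement's English description precedes it below -/
import Mathlib

section
/- Assume 1-H < Hd < 1, let κ > 0, β > 0 with 1-Hd < Hβ < min(H, 2-2Hd). Then there is a constant c independent of n and K such that for all n ∈ ℕ, s > 0, 0 < K < ns/2, y ∈ ℝ^d: n^{-Hd} ∫_K^{ns/2} (s - u/n)^{-Hd} [∫_{ℝ^d} e^{-κ|ξ|²(u/n)^{2H}} |1 - e^{i ξ·y / n^H}| dξ] du ≤ c s^{-Hd} K^{1-Hd-Hβ} |y|^β. -/
/-!
For `0 < β ≤ 1` we have `|1 - e^{iθ}| ≤ 2|θ|^β`, so the inner integral is at most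
`2 (‖y‖/n^H)^β ∫ ‖ξ‖^β e^{-κ‖ξ‖²(u/n)^{2H}} dξ`, and the substitution `ξ ↦ (u/n)^H ξ` turns this
into a constant times `‖y‖^β n^{Hd} u^{-H(d+β)}`. For `u < ns/2` the weight `(s - u/n)^{-Hd}` is at
most `(s/2)^{-Hd}`, and since `H(d+β) > 1` the integral of `u^{-H(d+β)}` over `(K, ∞)` is
`K^{1-H(d+β)} / (H(d+β) - 1)`; the factors `n^{±Hd}` cancel.
-/

open MeasureTheory Set Module

theorem norm_one_sub_exp_I_mul_le_rpow {β : ℝ} (hβ0 : 0 ≤ β) (hβ1 : β ≤ 1) (θ : ℝ) :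
    ‖1 - Complex.exp (Complex.I * θ)‖ ≤ 2 * |θ| ^ β := by
  rw [norm_sub_rev]
  rcases le_or_gt |θ| 1 with hθ | hθ
  · calc ‖Complex.exp (Complex.I * θ) - 1‖ ≤ ‖θ‖ := Real.norm_exp_I_mul_ofReal_sub_one_le
      _ = |θ| := Real.norm_eq_abs θ
      _ ≤ |θ| ^ β := Real.self_le_rpow_of_le_one (abs_nonneg θ) hθ hβ1
      _ ≤ 2 * |θ| ^ β := by linarith [Real.rpow_nonneg (abs_nonneg θ) β]
  · calc ‖Complex.exp (Complex.I * θ) - 1‖ ≤ ‖Complex.exp (Complex.I * θ)‖ + ‖(1 : ℂ)‖ :=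
          norm_sub_le _ _
      _ = 2 := by rw [Complex.norm_exp_I_mul_ofReal, norm_one]; norm_num
      _ ≤ 2 * |θ| ^ β := by linarith [Real.one_le_rpow hθ.le hβ0]

theorem norm_one_sub_exp_inner_le {E : Type*} [NormedAddCommGroup E] [InnerProductSpace ℝ E]
    {β a : ℝ} (hβ0 : 0 ≤ β) (hβ1 : β ≤ 1) (ha : 0 < a) (ξ y : E) :
    ‖1 - Complex.exp (Complex.I * ((inner ℝ ξ y / a : ℝ) : ℂ))‖ ≤ 2 * (‖y‖ / a) ^ β * ‖ξ‖ ^ β := by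
  have hθ : |inner ℝ ξ y / a| ≤ ‖ξ‖ * (‖y‖ / a) := by
    rw [abs_div, abs_of_pos ha, mul_div_assoc']
    exact div_le_div_of_nonneg_right (abs_real_inner_le_norm ξ y) ha.le
  calc _ ≤ 2 * |inner ℝ ξ y / a| ^ β := norm_one_sub_exp_I_mul_le_rpow hβ0 hβ1 _
    _ ≤ 2 * (‖ξ‖ * (‖y‖ / a)) ^ β := by gcongr
    _ = 2 * (‖y‖ / a) ^ β * ‖ξ‖ ^ β := by
      rw [Real.mul_rpow (norm_nonneg ξ) (by positivity)]; ring

theorem integral_Ioo_rpow_neg_le {p K : ℝ} (hp : 1 < p) (hK : 0 < K) (L : ℝ) :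
    ∫ u in Ioo K L, u ^ (-p) ≤ K ^ (1 - p) / (p - 1) := by
  have hint := integrableOn_Ioi_rpow_of_lt (by linarith : -p < -1) hK
  calc ∫ u in Ioo K L, u ^ (-p) ≤ ∫ u in Ioi K, u ^ (-p) :=
        setIntegral_mono_set hint
          (ae_restrict_of_forall_mem measurableSet_Ioi fun u hu =>
            Real.rpow_nonneg (hK.trans hu).le _)
          Ioo_subset_Ioi_self.eventuallyLE
    _ = K ^ (1 - p) / (p - 1) := by
      rw [integral_Ioi_rpow_of_lt (by linarith) hK, neg_div, ← div_neg]; ring_nf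

section HaarMeasure

variable {E : Type*} [NormedAddCommGroup E] [NormedSpace ℝ E] [FiniteDimensional ℝ E]
  [MeasurableSpace E] [BorelSpace E] (μ : Measure E) [μ.IsAddHaarMeasure]

theorem integrable_norm_rpow_mul_exp_neg_mul_sq {b β : ℝ} (hb : 0 < b)
    (hβ : -(finrank ℝ E : ℝ) < β) :
    Integrable (fun ξ : E => ‖ξ‖ ^ β * Real.exp (-b * ‖ξ‖ ^ 2)) μ := by
  rcases subsingleton_or_nontrivial E with _ | _
  · exact .of_subsingleton
  have hdim : 1 ≤ finrank ℝ E := finrank_pos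
  -- in polar coordinates the integral becomes `∫₀^∞ t^(dim E - 1 + β) e^(-bt²) dt`
  refine (integrable_fun_norm_addHaar μ (f := fun t => t ^ β * Real.exp (-b * t ^ 2))).2 ?_
  refine (integrableOn_rpow_mul_exp_neg_mul_sq hb (s := (finrank ℝ E - 1 : ℕ) + β) ?_).congr_fun
    (fun t (ht : 0 < t) => ?_) measurableSet_Ioi
  · push_cast [hdim]; linarith
  · simp only [smul_eq_mul, Real.rpow_add ht, Real.rpow_natCast]; ring

theorem integral_norm_rpow_mul_exp_neg_mul_sq_mul_sq (κ β : ℝ) {t : ℝ} (ht : 0 < t) :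
    ∫ ξ, ‖ξ‖ ^ β * Real.exp (-κ * ‖ξ‖ ^ 2 * t ^ 2) ∂μ
      = t ^ (-(finrank ℝ E + β)) * ∫ ξ, ‖ξ‖ ^ β * Real.exp (-κ * ‖ξ‖ ^ 2) ∂μ := by
  have hscale : ∀ ξ : E, ‖ξ‖ ^ β * Real.exp (-κ * ‖ξ‖ ^ 2 * t ^ 2)
      = t ^ (-β) * (‖t • ξ‖ ^ β * Real.exp (-κ * ‖t • ξ‖ ^ 2)) := fun ξ => by
    rw [norm_smul, Real.norm_of_nonneg ht.le, Real.mul_rpow ht.le (norm_nonneg ξ),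
      Real.rpow_neg ht.le]
    field_simp
  simp_rw [hscale]
  rw [integral_const_mul,
    Measure.integral_comp_smul μ (fun ζ => ‖ζ‖ ^ β * Real.exp (-κ * ‖ζ‖ ^ 2)) t, smul_eq_mul,
    ← mul_assoc, abs_of_pos (by positivity), ← Real.rpow_natCast, ← Real.rpow_neg ht.le,
    ← Real.rpow_add ht, neg_add_rev]

end HaarMeasure

section InnerProductSpace

variable {E : Type*} [NormedAddCommGroup E] [InnerProductSpace ℝ E] [FiniteDimensional ℝ E]
  [MeasurableSpace E] [BorelSpace E] (μ : Measure E) [μ.IsAddHaarMeasure]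

theorem integral_exp_mul_norm_one_sub_exp_inner_le {κ β a t : ℝ} (hκ : 0 < κ) (hβ0 : 0 < β)
    (hβ1 : β ≤ 1) (ha : 0 < a) (ht : 0 < t) (y : E) :
    ∫ ξ, Real.exp (-κ * ‖ξ‖ ^ 2 * t ^ 2) *
        ‖1 - Complex.exp (Complex.I * ((inner ℝ ξ y / a : ℝ) : ℂ))‖ ∂μ
      ≤ 2 * (‖y‖ / a) ^ β * t ^ (-(finrank ℝ E + β)) *
          ∫ ξ, ‖ξ‖ ^ β * Real.exp (-κ * ‖ξ‖ ^ 2) ∂μ := by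
  have hmaj : Integrable (fun ξ : E => ‖ξ‖ ^ β * Real.exp (-κ * ‖ξ‖ ^ 2 * t ^ 2)) μ := by
    refine (integrable_norm_rpow_mul_exp_neg_mul_sq μ (b := κ * t ^ 2) (β := β) (by positivity)
        (by linarith [(Nat.cast_nonneg (finrank ℝ E) : (0 : ℝ) ≤ _)])).congr
      (.of_forall fun ξ => ?_)
    ring_nf
  calc _ ≤ ∫ ξ, 2 * (‖y‖ / a) ^ β * (‖ξ‖ ^ β * Real.exp (-κ * ‖ξ‖ ^ 2 * t ^ 2)) ∂μ := by
        refine integral_mono_of_nonneg (.of_forall fun ξ => by positivity) (hmaj.const_mul _)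
          (.of_forall fun ξ => ?_)
        calc _ ≤ Real.exp (-κ * ‖ξ‖ ^ 2 * t ^ 2) * (2 * (‖y‖ / a) ^ β * ‖ξ‖ ^ β) :=
              mul_le_mul_of_nonneg_left (norm_one_sub_exp_inner_le hβ0.le hβ1 ha ξ y)
                (Real.exp_pos _).le
          _ = _ := by ring
    _ = _ := by
      rw [integral_const_mul, integral_norm_rpow_mul_exp_neg_mul_sq_mul_sq μ κ β ht]
      ring

theorem rpow_mul_integral_exp_mul_norm_one_sub_exp_inner_le {κ β H N s u : ℝ} (hκ : 0 < κ)
    (hβ0 : 0 < β) (hβ1 : β ≤ 1) (hH : 0 ≤ H) (hN : 0 < N) (hu : 0 < u) (hus : u / N < s / 2)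
    (y : E) :
    (s - u / N) ^ (-(H * finrank ℝ E)) * ∫ ξ, Real.exp (-κ * ‖ξ‖ ^ 2 * (u / N) ^ (2 * H)) *
        ‖1 - Complex.exp (Complex.I * ((inner ℝ ξ y / N ^ H : ℝ) : ℂ))‖ ∂μ
      ≤ (s / 2) ^ (-(H * finrank ℝ E)) *
          (2 * ‖y‖ ^ β * (∫ ξ, ‖ξ‖ ^ β * Real.exp (-κ * ‖ξ‖ ^ 2) ∂μ) * N ^ (H * finrank ℝ E)) *
          u ^ (-(H * finrank ℝ E + H * β)) := by
  set d : ℝ := (finrank ℝ E : ℝ)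
  have hd : 0 ≤ H * d := mul_nonneg hH (Nat.cast_nonneg _)
  have huN : 0 < u / N := div_pos hu hN
  have hsq : (u / N) ^ (2 * H) = ((u / N) ^ H) ^ 2 := by
    rw [← Real.rpow_natCast, ← Real.rpow_mul huN.le]; ring_nf
  have hscale : (‖y‖ / N ^ H) ^ β * ((u / N) ^ H) ^ (-(d + β))
      = ‖y‖ ^ β * N ^ (H * d) * u ^ (-(H * d + H * β)) := by
    rw [Real.div_rpow (norm_nonneg y) (by positivity), ← Real.rpow_mul hN.le,
      ← Real.rpow_mul huN.le, Real.div_rpow hu.le hN.le, mul_neg, mul_add,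
      Real.rpow_neg hN.le, Real.rpow_add hN, Real.rpow_mul hN.le]
    field_simp
  have hinner := integral_exp_mul_norm_one_sub_exp_inner_le μ hκ hβ0 hβ1
    (Real.rpow_pos_of_pos hN H) (Real.rpow_pos_of_pos huN H) y
  rw [← hsq] at hinner
  calc _ ≤ (s / 2) ^ (-(H * d)) * (2 * (‖y‖ / N ^ H) ^ β * ((u / N) ^ H) ^ (-(d + β)) *
          ∫ ξ, ‖ξ‖ ^ β * Real.exp (-κ * ‖ξ‖ ^ 2) ∂μ) :=
        mul_le_mul (Real.rpow_le_rpow_of_nonpos (by linarith) (by linarith) (neg_nonpos.2 hd))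
          hinner (integral_nonneg fun ξ => by positivity) (Real.rpow_nonneg (by linarith) _)
    _ = _ := by rw [mul_assoc 2, hscale]; ring

theorem integral_Ioo_rpow_mul_integral_exp_mul_norm_one_sub_exp_inner_le {κ β H N s K : ℝ}
    (hκ : 0 < κ) (hβ0 : 0 < β) (hβ1 : β ≤ 1) (hH : 0 ≤ H) (hp : 1 < H * finrank ℝ E + H * β)
    (hN : 0 < N) (hs : 0 < s) (hK : 0 < K) (y : E) :
    ∫ u in Ioo K (N * s / 2), (s - u / N) ^ (-(H * finrank ℝ E)) *
        ∫ ξ, Real.exp (-κ * ‖ξ‖ ^ 2 * (u / N) ^ (2 * H)) *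
          ‖1 - Complex.exp (Complex.I * ((inner ℝ ξ y / N ^ H : ℝ) : ℂ))‖ ∂μ
      ≤ (s / 2) ^ (-(H * finrank ℝ E)) *
          (2 * ‖y‖ ^ β * (∫ ξ, ‖ξ‖ ^ β * Real.exp (-κ * ‖ξ‖ ^ 2) ∂μ) * N ^ (H * finrank ℝ E)) *
          (K ^ (1 - (H * finrank ℝ E + H * β)) / (H * finrank ℝ E + H * β - 1)) := by
  set p := H * (finrank ℝ E : ℝ) + H * β
  set B := (s / 2) ^ (-(H * finrank ℝ E)) *
    (2 * ‖y‖ ^ β * (∫ ξ, ‖ξ‖ ^ β * Real.exp (-κ * ‖ξ‖ ^ 2) ∂μ) * N ^ (H * finrank ℝ E))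
  have hB : 0 ≤ B := by
    have : 0 ≤ ∫ ξ, ‖ξ‖ ^ β * Real.exp (-κ * ‖ξ‖ ^ 2) ∂μ :=
      integral_nonneg fun ξ => by positivity
    positivity
  have hlt : ∀ u ∈ Ioo K (N * s / 2), u / N < s / 2 := fun u hu => by
    rw [div_lt_iff₀ hN]; linarith [hu.2]
  calc _ ≤ ∫ u in Ioo K (N * s / 2), B * u ^ (-p) := by
        refine integral_mono_of_nonneg
          (ae_restrict_of_forall_mem measurableSet_Ioo fun u hu => ?_)
          (((integrableOn_Ioi_rpow_of_lt (by linarith) hK).mono_set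
            Ioo_subset_Ioi_self).const_mul B)
          (ae_restrict_of_forall_mem measurableSet_Ioo fun u hu =>
            rpow_mul_integral_exp_mul_norm_one_sub_exp_inner_le μ hκ hβ0 hβ1 hH hN
              (hK.trans hu.1) (hlt u hu) y)
        have := hlt u hu
        exact mul_nonneg (Real.rpow_nonneg (by linarith) _) (integral_nonneg fun ξ => by positivity)
    _ = B * ∫ u in Ioo K (N * s / 2), u ^ (-p) := integral_const_mul _ _
    _ ≤ B * (K ^ (1 - p) / (p - 1)) :=
      mul_le_mul_of_nonneg_left (integral_Ioo_rpow_neg_le hp hK _) hB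

end InnerProductSpace

theorem stmt_7_general (d : ℕ) (H : ℝ) (hH0 : 0 < H)
    (κ : ℝ) (hκ : 0 < κ)
    (β : ℝ) (hβ0 : 0 < β) (hβ1 : 1 - H * d < H * β)
    (hβ2 : H * β < min H (2 - 2 * (H * d))) :
    ∃ c : ℝ, ∀ (n : ℕ), 1 ≤ n → ∀ s : ℝ, 0 < s → ∀ K : ℝ, 0 < K → K < n * s / 2 →
      ∀ y : EuclideanSpace ℝ (Fin d),
      (n:ℝ) ^ (-(H * d)) *
        (∫ u in Ioo K ((n:ℝ) * s / 2), (s - u / n) ^ (-(H * d)) *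
          ∫ ξ : EuclideanSpace ℝ (Fin d),
            Real.exp (-κ * ‖ξ‖ ^ 2 * (u / n) ^ (2 * H)) *
              ‖1 - Complex.exp (Complex.I * ((inner ℝ ξ y / (n:ℝ) ^ H : ℝ) : ℂ))‖)
      ≤ c * s ^ (-(H * d)) * K ^ (1 - H * d - H * β) * ‖y‖ ^ β := by
  have hβ_le_one : β ≤ 1 := by nlinarith [min_le_left H (2 - 2 * (H * d))]
  have hp : 1 < H * d + H * β := by linarith
  set C := ∫ ξ : EuclideanSpace ℝ (Fin d), ‖ξ‖ ^ β * Real.exp (-κ * ‖ξ‖ ^ 2)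
  refine ⟨2 ^ (H * d) * 2 * C / (H * d + H * β - 1), fun n hn s hs K hK _ y => ?_⟩
  have hN : (0 : ℝ) < n := by exact_mod_cast hn
  have key := integral_Ioo_rpow_mul_integral_exp_mul_norm_one_sub_exp_inner_le volume hκ hβ0
    hβ_le_one hH0.le (by simpa using hp) hN hs hK y
  simp only [finrank_euclideanSpace_fin] at key
  have hn1 : (n : ℝ) ^ (-(H * d)) * (n : ℝ) ^ (H * d) = 1 := by
    rw [← Real.rpow_add hN, neg_add_cancel, Real.rpow_zero]
  have hs2 : (s / 2) ^ (-(H * d)) = 2 ^ (H * d) * s ^ (-(H * d)) := by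
    rw [Real.div_rpow hs.le zero_le_two, Real.rpow_neg zero_le_two, div_inv_eq_mul, mul_comm]
  calc _ ≤ (n : ℝ) ^ (-(H * d)) *
        ((s / 2) ^ (-(H * d)) * (2 * ‖y‖ ^ β * C * (n : ℝ) ^ (H * d)) *
          (K ^ (1 - (H * d + H * β)) / (H * d + H * β - 1))) :=
      mul_le_mul_of_nonneg_left key (Real.rpow_nonneg hN.le _)
    _ = _ := by
      rw [hs2, sub_add_eq_sub_sub]
      linear_combination (2 ^ (H * d) * s ^ (-(H * d)) * (2 * ‖y‖ ^ β * C) *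
        (K ^ (1 - H * d - H * β) / (H * d + H * β - 1))) * hn1

theorem stmt_7 (d : ℕ) (hd : 1 ≤ d) (H : ℝ) (hH0 : 0 < H) (hH1 : H < 1)
    (hHd1 : 1 - H < H * d) (hHd2 : H * d < 1)
    (κ : ℝ) (hκ : 0 < κ)
    (β : ℝ) (hβ0 : 0 < β) (hβ1 : 1 - H * d < H * β)
    (hβ2 : H * β < min H (2 - 2 * (H * d))) :
    ∃ c : ℝ, ∀ (n : ℕ), 1 ≤ n → ∀ s : ℝ, 0 < s → ∀ K : ℝ, 0 < K → K < n * s / 2 →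
      ∀ y : EuclideanSpace ℝ (Fin d),
      (n:ℝ) ^ (-(H * d)) *
        (∫ u in Ioo K ((n:ℝ) * s / 2), (s - u / n) ^ (-(H * d)) *
          ∫ ξ : EuclideanSpace ℝ (Fin d),
            Real.exp (-κ * ‖ξ‖ ^ 2 * (u / n) ^ (2 * H)) *
              ‖1 - Complex.exp (Complex.I * ((inner ℝ ξ y / (n:ℝ) ^ H : ℝ) : ℂ))‖)
      ≤ c * s ^ (-(H * d)) * K ^ (1 - H * d - H * β) * ‖y‖ ^ β :=
  stmt_7_general d H hH0 κ hκ β hβ0 hβ1 hβ2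
end

section
/- For 0 < Hd < 1, any K > 0 and any n ∈ ℕ (n ≥ 1), there is a constant c₁ depending only on Hd such that for all u > 0: ∫_0^{min(K, nu)} v^{-Hd} (u - v/n)^{-Hd} dv ≤ c₁ K^{1-Hd} u^{-Hd}. -/
open MeasureTheory Set
noncomputable section

theorem stmt_9 (d : ℕ) (hd : 1 ≤ d) (H : ℝ) (hH0 : 0 < H * d) (hH1 : H * d < 1) :
    ∃ c₁ : ℝ, 0 < c₁ ∧ ∀ (n : ℕ), 1 ≤ n → ∀ K : ℝ, 0 < K → ∀ u : ℝ, 0 < u →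
      (∫ v in Ioo (0:ℝ) (min K ((n:ℝ) * u)), v ^ (-(H * d)) * (u - v / n) ^ (-(H * d)))
        ≤ c₁ * K ^ (1 - H * d) * u ^ (-(H * d)) := by
  set a := H * (d:ℝ) with ha
  have ha0 : 0 < a := hH0
  have ha1 : a < 1 := hH1
  have h1a : 0 < 1 - a := by linarith
  refine ⟨8 / (1 - a), by positivity, ?_⟩
  intro n hn K hK u hu
  have hn0 : (0:ℝ) < n := by exact_mod_cast hn
  have hne : (n:ℝ) ≠ 0 := ne_of_gt hn0
  set m := min K ((n:ℝ) * u) with hm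
  have hm0 : 0 < m := lt_min hK (by positivity)
  have hmK : m ≤ K := min_le_left _ _
  have hmnu : m ≤ (n:ℝ) * u := min_le_right _ _
  -- antitonicity of x ↦ x^(-a)
  have hanti : ∀ x y : ℝ, 0 < x → x ≤ y → y ^ (-a) ≤ x ^ (-a) := fun x y hx hxy =>
    Real.rpow_le_rpow_of_nonpos hx hxy (by linarith)
  -- (x/2)^(-a) = 2^a * x^(-a) for x ≥ 0
  have hhalf : ∀ x : ℝ, 0 ≤ x → (x / 2) ^ (-a) = 2 ^ a * x ^ (-a) := by
    intro x hx
    rw [Real.div_rpow hx (by norm_num), Real.rpow_neg (by norm_num : (0:ℝ) ≤ 2),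
      div_eq_mul_inv, inv_inv, mul_comm]
  have h2a : (2:ℝ) ^ a ≤ 2 := by
    calc (2:ℝ) ^ a ≤ 2 ^ (1:ℝ) := Real.rpow_le_rpow_of_exponent_le one_le_two ha1.le
    _ = 2 := Real.rpow_one 2
  have h2a' : (2:ℝ) ^ (1 - a) ≤ 2 := by
    calc (2:ℝ) ^ (1-a) ≤ 2 ^ (1:ℝ) := Real.rpow_le_rpow_of_exponent_le one_le_two (by linarith)
    _ = 2 := Real.rpow_one 2
  -- value of ∫_0^b v^(-a)
  have hval : ∀ b : ℝ, 0 ≤ b → ∫ v in Ioo (0:ℝ) b, v ^ (-a) = b ^ (1 - a) / (1 - a) := by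
    intro b hb
    rw [← integral_Ioc_eq_integral_Ioo, ← intervalIntegral.integral_of_le hb,
      integral_rpow (Or.inl (by linarith))]
    rw [Real.zero_rpow (by linarith : -a + 1 ≠ 0)]
    rw [neg_add_eq_sub, sub_zero]
  -- integrability of v^(-a) on Ioo 0 b
  have hint1 : ∀ b : ℝ, 0 ≤ b → IntegrableOn (fun v : ℝ => v ^ (-a)) (Ioo 0 b) := by
    intro b hb
    have h := intervalIntegral.intervalIntegrable_rpow' (a := 0) (b := b) (r := -a)
      (by linarith)
    rw [intervalIntegrable_iff, uIoc_of_le hb] at h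
    exact h.mono_set Ioo_subset_Ioc_self
  -- integrability of (u - v/n)^(-a) on Ioo 0 m
  have hint2 : IntegrableOn (fun v : ℝ => (u - v / n) ^ (-a)) (Ioo 0 m) := by
    have h1 : IntervalIntegrable (fun t : ℝ => t ^ (-a)) volume (u - m / n) u :=
      intervalIntegral.intervalIntegrable_rpow' (by linarith)
    have h2 := h1.comp_sub_left u
    have h3 := h2.comp_mul_right (c := (n:ℝ)⁻¹) (by simp) (by simp)
    rw [sub_sub_cancel, sub_self, zero_div, div_eq_mul_inv, inv_inv, div_mul_cancel₀ _ hne] at h3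
    have h4 : IntervalIntegrable (fun v : ℝ => (u - v / n) ^ (-a)) volume 0 m := by
      have := h3.symm
      simpa [div_eq_mul_inv] using this
    rw [intervalIntegrable_iff, uIoc_of_le hm0.le] at h4
    exact h4.mono_set Ioo_subset_Ioc_self
  -- value bound of ∫_0^m (u - v/n)^(-a)
  have hJ : ∫ v in Ioo (0:ℝ) m, (u - v / n) ^ (-a) ≤ (n:ℝ) * u ^ (1 - a) / (1 - a) := by
    rw [← integral_Ioc_eq_integral_Ioo, ← intervalIntegral.integral_of_le hm0.le]
    have e1 : (∫ v in (0:ℝ)..m, (u - v / n) ^ (-a))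
        = (n:ℝ) • ∫ s in (0:ℝ)/n..m/n, (u - s) ^ (-a) :=
      intervalIntegral.integral_comp_div (f := fun s : ℝ => (u - s) ^ (-a)) hne
    rw [e1, intervalIntegral.integral_comp_sub_left (fun t : ℝ => t ^ (-a)) u,
      integral_rpow (Or.inl (by linarith : (-1:ℝ) < -a))]
    rw [zero_div, sub_zero, neg_add_eq_sub]
    have hum : 0 ≤ (u - m / n) ^ (1 - a) := Real.rpow_nonneg
      (by rw [sub_nonneg, div_le_iff₀ hn0]; linarith [hmnu]) _
    rw [smul_eq_mul]
    have : (u ^ (1 - a) - (u - m / n) ^ (1 - a)) / (1 - a) ≤ u ^ (1 - a) / (1 - a) := by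
      apply div_le_div_of_nonneg_right ?_ h1a.le |>.trans_eq rfl
      · linarith
    calc (n:ℝ) * ((u ^ (1 - a) - (u - m / n) ^ (1 - a)) / (1 - a))
        ≤ (n:ℝ) * (u ^ (1 - a) / (1 - a)) := by
          apply mul_le_mul_of_nonneg_left this hn0.le
      _ = (n:ℝ) * u ^ (1 - a) / (1 - a) := by ring
  -- positivity of u - v/n on the interval, and nonnegativity of the integrand
  have huv : ∀ v ∈ Ioo (0:ℝ) m, 0 < u - v / n := by
    intro v hv
    have : v / n < u := by
      rw [div_lt_iff₀ hn0]
      calc v < m := hv.2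
      _ ≤ (n:ℝ) * u := hmnu
      _ = u * n := by ring
    linarith
  have hfnonneg : 0 ≤ᵐ[volume.restrict (Ioo (0:ℝ) m)]
      fun v => v ^ (-a) * (u - v / n) ^ (-a) := by
    filter_upwards [ae_restrict_mem measurableSet_Ioo] with v hv
    exact mul_nonneg (Real.rpow_nonneg hv.1.le _) (Real.rpow_nonneg (huv v hv).le _)
  have hKpos : (0:ℝ) < K ^ (1 - a) := Real.rpow_pos_of_pos hK _
  have hupos : (0:ℝ) < u ^ (-a) := Real.rpow_pos_of_pos hu _
  rcases le_or_gt ((n:ℝ) * u) (2 * K) with hcase | hcase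
  · -- Case A : n*u ≤ 2K
    set g : ℝ → ℝ := fun v =>
      2 ^ a * u ^ (-a) * v ^ (-a) + ((n:ℝ) * u / 2) ^ (-a) * (u - v / n) ^ (-a) with hg
    have hgint : IntegrableOn g (Ioo 0 m) :=
      (((hint1 m hm0.le).const_mul _).add (hint2.const_mul _))
    have hub : ∀ v ∈ Ioo (0:ℝ) m, v ^ (-a) * (u - v / n) ^ (-a) ≤ g v := by
      intro v hv
      have hv0 : 0 < v := hv.1
      have huv' := huv v hv
      have hterm1 : 0 ≤ 2 ^ a * u ^ (-a) * v ^ (-a) := by positivity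
      have hterm2 : 0 ≤ ((n:ℝ) * u / 2) ^ (-a) * (u - v / n) ^ (-a) :=
        mul_nonneg (Real.rpow_nonneg (by positivity) _) (Real.rpow_nonneg huv'.le _)
      rcases le_or_gt v ((n:ℝ) * u / 2) with hvhalf | hvhalf
      · have h2 : u / 2 ≤ u - v / n := by
          have : v / n ≤ u / 2 := by
            rw [div_le_iff₀ hn0]
            calc v ≤ (n:ℝ) * u / 2 := hvhalf
            _ = u / 2 * n := by ring
          linarith
        have hle : (u - v / n) ^ (-a) ≤ 2 ^ a * u ^ (-a) := by
          have := hanti (u / 2) (u - v / n) (by positivity) h2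
          rwa [hhalf u hu.le] at this
        calc v ^ (-a) * (u - v / n) ^ (-a)
            ≤ v ^ (-a) * (2 ^ a * u ^ (-a)) :=
              mul_le_mul_of_nonneg_left hle (Real.rpow_nonneg hv0.le _)
          _ = 2 ^ a * u ^ (-a) * v ^ (-a) := by ring
          _ ≤ g v := by rw [hg]; linarith
      · have hle : v ^ (-a) ≤ ((n:ℝ) * u / 2) ^ (-a) :=
          hanti ((n:ℝ) * u / 2) v (by positivity) hvhalf.le
        calc v ^ (-a) * (u - v / n) ^ (-a)
            ≤ ((n:ℝ) * u / 2) ^ (-a) * (u - v / n) ^ (-a) :=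
              mul_le_mul_of_nonneg_right hle (Real.rpow_nonneg huv'.le _)
          _ ≤ g v := by rw [hg]; linarith
    have hle := integral_mono_of_nonneg hfnonneg hgint
      (by filter_upwards [ae_restrict_mem measurableSet_Ioo] with v hv using hub v hv)
    refine hle.trans ?_
    have hsplit : ∫ v in Ioo (0:ℝ) m, g v
        = 2 ^ a * u ^ (-a) * (m ^ (1 - a) / (1 - a))
          + ((n:ℝ) * u / 2) ^ (-a) * ∫ v in Ioo (0:ℝ) m, (u - v / n) ^ (-a) := by
      rw [hg, integral_add ((hint1 m hm0.le).const_mul _) (hint2.const_mul _),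
        integral_const_mul, integral_const_mul, hval m hm0.le]
    rw [hsplit]
    -- bound each term
    have hm2K : m ^ (1 - a) ≤ 2 * K ^ (1 - a) := by
      calc m ^ (1 - a) ≤ (2 * K) ^ (1 - a) :=
            Real.rpow_le_rpow hm0.le (le_trans hmnu hcase) h1a.le
        _ = 2 ^ (1 - a) * K ^ (1 - a) := Real.mul_rpow (by norm_num) hK.le
        _ ≤ 2 * K ^ (1 - a) := mul_le_mul_of_nonneg_right h2a' hKpos.le
    have hterm2bound : ((n:ℝ) * u / 2) ^ (-a) * ((n:ℝ) * u ^ (1 - a) / (1 - a))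
        ≤ 2 * (2 * K ^ (1 - a)) * u ^ (-a) / (1 - a) := by
      have e2 : ((n:ℝ) * u / 2) ^ (-a) = 2 ^ a * ((n:ℝ) * u) ^ (-a) :=
        hhalf ((n:ℝ) * u) (by positivity)
      have e3 : ((n:ℝ) * u) ^ (-a) * ((n:ℝ) * u ^ (1 - a))
          = ((n:ℝ) * u) ^ (1 - a) * u ^ (-a) := by
        have eu : u ^ (1 - a) = u * u ^ (-a) := by
          rw [show (1 : ℝ) - a = 1 + -a by ring, Real.rpow_add hu, Real.rpow_one]
        have enu : ((n:ℝ) * u) ^ (1 - a) = ((n:ℝ) * u) * ((n:ℝ) * u) ^ (-a) := by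
          rw [show (1 : ℝ) - a = 1 + -a by ring, Real.rpow_add (by positivity),
            Real.rpow_one]
        rw [eu, enu]; ring
      have hnuK : ((n:ℝ) * u) ^ (1 - a) ≤ 2 * K ^ (1 - a) := by
        calc ((n:ℝ) * u) ^ (1 - a) ≤ (2 * K) ^ (1 - a) :=
              Real.rpow_le_rpow (by positivity) hcase h1a.le
          _ = 2 ^ (1 - a) * K ^ (1 - a) := Real.mul_rpow (by norm_num) hK.le
          _ ≤ 2 * K ^ (1 - a) := mul_le_mul_of_nonneg_right h2a' hKpos.le
      calc ((n:ℝ) * u / 2) ^ (-a) * ((n:ℝ) * u ^ (1 - a) / (1 - a))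
          = 2 ^ a * (((n:ℝ) * u) ^ (-a) * ((n:ℝ) * u ^ (1 - a))) / (1 - a) := by
            rw [e2]; ring
        _ = 2 ^ a * (((n:ℝ) * u) ^ (1 - a) * u ^ (-a)) / (1 - a) := by rw [e3]
        _ ≤ 2 * (2 * K ^ (1 - a) * u ^ (-a)) / (1 - a) := by
            apply div_le_div_of_nonneg_right ?_ h1a.le |>.trans_eq rfl
            have h1 : 2 ^ a * (((n:ℝ) * u) ^ (1 - a) * u ^ (-a))
                ≤ 2 * (((n:ℝ) * u) ^ (1 - a) * u ^ (-a)) :=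
              mul_le_mul_of_nonneg_right h2a (by positivity)
            have h2 : 2 * (((n:ℝ) * u) ^ (1 - a) * u ^ (-a))
                ≤ 2 * (2 * K ^ (1 - a) * u ^ (-a)) := by
              apply mul_le_mul_of_nonneg_left ?_ (by norm_num)
              exact mul_le_mul_of_nonneg_right hnuK hupos.le
            linarith
        _ = 2 * (2 * K ^ (1 - a)) * u ^ (-a) / (1 - a) := by ring
    have hJ2 : ((n:ℝ) * u / 2) ^ (-a) * (∫ v in Ioo (0:ℝ) m, (u - v / n) ^ (-a))
        ≤ ((n:ℝ) * u / 2) ^ (-a) * ((n:ℝ) * u ^ (1 - a) / (1 - a)) :=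
      mul_le_mul_of_nonneg_left hJ (Real.rpow_nonneg (by positivity) _)
    have hT1 : 2 ^ a * u ^ (-a) * (m ^ (1 - a) / (1 - a))
        ≤ 2 * (2 * K ^ (1 - a)) * u ^ (-a) / (1 - a) := by
      calc 2 ^ a * u ^ (-a) * (m ^ (1 - a) / (1 - a))
          ≤ 2 * u ^ (-a) * (m ^ (1 - a) / (1 - a)) := by
            apply mul_le_mul_of_nonneg_right ?_ (by positivity)
            exact mul_le_mul_of_nonneg_right h2a hupos.le
        _ ≤ 2 * u ^ (-a) * (2 * K ^ (1 - a) / (1 - a)) := by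
            apply mul_le_mul_of_nonneg_left ?_ (by positivity)
            exact div_le_div_of_nonneg_right hm2K h1a.le
        _ = 2 * (2 * K ^ (1 - a)) * u ^ (-a) / (1 - a) := by ring
    calc 2 ^ a * u ^ (-a) * (m ^ (1 - a) / (1 - a))
          + ((n:ℝ) * u / 2) ^ (-a) * ∫ v in Ioo (0:ℝ) m, (u - v / n) ^ (-a)
        ≤ 2 * (2 * K ^ (1 - a)) * u ^ (-a) / (1 - a)
          + 2 * (2 * K ^ (1 - a)) * u ^ (-a) / (1 - a) := by
          have := hJ2.trans hterm2bound
          linarith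
      _ = 8 / (1 - a) * K ^ (1 - a) * u ^ (-a) := by ring
  · -- Case B : 2K < n*u, so m = K and u - v/n ≥ u/2 on (0, K)
    have hmk : m = K := min_eq_left (by nlinarith)
    set g : ℝ → ℝ := fun v => 2 ^ a * u ^ (-a) * v ^ (-a) with hg
    have hgint : IntegrableOn g (Ioo 0 m) := (hint1 m hm0.le).const_mul _
    have hub : ∀ v ∈ Ioo (0:ℝ) m, v ^ (-a) * (u - v / n) ^ (-a) ≤ g v := by
      intro v hv
      have hv0 : 0 < v := hv.1
      have hvK : v < K := hmk ▸ hv.2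
      have h2 : u / 2 ≤ u - v / n := by
        have : v / n < u / 2 := by
          rw [div_lt_iff₀ hn0]
          calc v < K := hvK
            _ ≤ (n:ℝ) * u / 2 := by linarith
            _ = u / 2 * n := by ring
        linarith
      have hle : (u - v / n) ^ (-a) ≤ 2 ^ a * u ^ (-a) := by
        have := hanti (u / 2) (u - v / n) (by positivity) h2
        rwa [hhalf u hu.le] at this
      calc v ^ (-a) * (u - v / n) ^ (-a)
          ≤ v ^ (-a) * (2 ^ a * u ^ (-a)) :=
            mul_le_mul_of_nonneg_left hle (Real.rpow_nonneg hv0.le _)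
        _ = g v := by rw [hg]; ring
    have hle := integral_mono_of_nonneg hfnonneg hgint
      (by filter_upwards [ae_restrict_mem measurableSet_Ioo] with v hv using hub v hv)
    refine hle.trans ?_
    have hval' : ∫ v in Ioo (0:ℝ) m, g v
        = 2 ^ a * u ^ (-a) * (K ^ (1 - a) / (1 - a)) := by
      rw [hg, integral_const_mul, hval m hm0.le, hmk]
    rw [hval']
    calc 2 ^ a * u ^ (-a) * (K ^ (1 - a) / (1 - a))
        ≤ 2 * u ^ (-a) * (K ^ (1 - a) / (1 - a)) := by
          apply mul_le_mul_of_nonneg_right ?_ (by positivity)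
          exact mul_le_mul_of_nonneg_right h2a hupos.le
      _ ≤ 8 / (1 - a) * K ^ (1 - a) * u ^ (-a) := by
          rw [show 8 / (1 - a) * K ^ (1 - a) * u ^ (-a)
              = 8 * u ^ (-a) * (K ^ (1 - a) / (1 - a)) by ring]
          apply mul_le_mul_of_nonneg_right ?_ (by positivity)
          apply mul_le_mul_of_nonneg_right (by norm_num) hupos.le
end
end

section
/- Let B be a d-dimensional fractional Brownian motion with Hurst index H ∈ (0,1) satisfying the local nondeterminism property: Var(∑_{i=1}^k u_i · (B(s_i) - B(s_{i-1}))) ≥ k_H ∑_{i=1}^k |u_i|² (s_i - s_{i-1})^{2H} for all 0 = s₀ < s₁ < ⋯ < s_k and u_i ∈ ℝ^d. Then the covariance matrix A_k(s) of the Gaussian vector (B(s₁), …, B(s_k)) satisfies det(A_k(s))^{-1/2} ≤ c^k ∏_{i=1}^k (s_i - s_{i-1})^{-Hd} for a constant c depending only on H and d. -/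
/-!
Since the components of `B` are independent, `A_k(s) = K ⊗ 1_d` with `K = (R(s_i, s_j))_{ij}`,
so `det A_k(s) = (det K)^d`. Testing local nondeterminism on vectors `ξ_i = u_i e` along a fixed
unit vector `e` gives `Tᵀ D T ≤ K` in the Loewner order, where `T` is the upper triangular matrix
of ones (so `(T u)_i = ∑_{j ≥ i} u_j` is the change of variables `η = T ξ`) and
`D = diag(k_H (s_i - s_{i-1})^{2H})`. The determinant is monotone on positive definite matrices
and `det T = 1`, hence `det K ≥ ∏ k_H (s_i - s_{i-1})^{2H}`.
-/

open Matrix Finset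
open scoped Kronecker

namespace Matrix

variable {ι κ R : Type*} [Fintype ι]

lemma one_le_det_of_posSemidef_sub_one [DecidableEq ι] {P : Matrix ι ι ℝ}
    (h : (P - 1).PosSemidef) : 1 ≤ P.det := by
  have hP : P.IsHermitian := by simpa using h.isHermitian.add isHermitian_one
  rw [hP.det_eq_prod_eigenvalues]
  refine Finset.one_le_prod fun i _ => ?_
  have hv : star ⇑(hP.eigenvectorBasis i) ⬝ᵥ ⇑(hP.eigenvectorBasis i) = 1 := by
    rw [dotProduct_comm, ← EuclideanSpace.inner_eq_star_dotProduct, real_inner_self_eq_norm_sq,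
      hP.eigenvectorBasis.orthonormal.1 i, one_pow]
  have := h.dotProduct_mulVec_nonneg (hP.eigenvectorBasis i)
  rw [sub_mulVec, one_mulVec, dotProduct_sub, hv] at this
  simpa [hP.eigenvalues_eq i] using this

open scoped MatrixOrder in
/-- Writing `N = Bᴴ B`, the matrix `P = B⁻ᴴ M B⁻¹` satisfies `P ≥ 1` and `det M = det N * det P`. -/
lemma det_le_det_of_posSemidef_sub [DecidableEq ι] {M N : Matrix ι ι ℝ} (hN : N.PosDef)
    (h : (M - N).PosSemidef) : N.det ≤ M.det := by
  obtain ⟨B, rfl⟩ := CStarAlgebra.nonneg_iff_eq_star_mul_self.mp hN.posSemidef.nonneg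
  rw [star_eq_conjTranspose] at h hN ⊢
  have hB : IsUnit B.det := isUnit_iff_ne_zero.mpr fun h0 => by simpa [h0] using hN.det_pos
  have hBC : B * B⁻¹ = 1 := mul_nonsing_inv B hB
  have hCB : B⁻¹ * B = 1 := nonsing_inv_mul B hB
  have hP : ((B⁻¹)ᴴ * M * B⁻¹ - 1).PosSemidef := by
    have hN1 : (B⁻¹)ᴴ * (Bᴴ * B) * B⁻¹ = 1 := by
      calc _ = (B * B⁻¹)ᴴ * (B * B⁻¹) := by rw [conjTranspose_mul]; noncomm_ring
        _ = 1 := by rw [hBC, conjTranspose_one, Matrix.one_mul]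
    rw [← hN1, ← Matrix.sub_mul, ← Matrix.mul_sub]
    exact h.conjTranspose_mul_mul_same B⁻¹
  have hM : Bᴴ * ((B⁻¹)ᴴ * M * B⁻¹) * B = M := by
    calc _ = (B⁻¹ * B)ᴴ * M * (B⁻¹ * B) := by rw [conjTranspose_mul]; noncomm_ring
      _ = M := by rw [hCB, conjTranspose_one, Matrix.one_mul, Matrix.mul_one]
  calc (Bᴴ * B).det = (Bᴴ * B).det * 1 := (mul_one _).symm
    _ ≤ (Bᴴ * B).det * ((B⁻¹)ᴴ * M * B⁻¹).det :=
      mul_le_mul_of_nonneg_left (one_le_det_of_posSemidef_sub_one hP) hN.det_pos.le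
    _ = (Bᴴ * ((B⁻¹)ᴴ * M * B⁻¹) * B).det := by simp only [det_mul]; ring
    _ = M.det := by rw [hM]

lemma posSemidef_sub_of_dotProduct_mulVec_le {A B : Matrix ι ι ℝ} (hA : A.IsHermitian)
    (hB : B.IsHermitian) (h : ∀ u, u ⬝ᵥ B *ᵥ u ≤ u ⬝ᵥ A *ᵥ u) : (A - B).PosSemidef :=
  .of_dotProduct_mulVec_nonneg (hA.sub hB) fun u => by
    simpa [sub_mulVec, dotProduct_sub] using h u

lemma dotProduct_mulVec_self_eq_sum [CommSemiring R] (A : Matrix ι ι R) (u : ι → R) :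
    u ⬝ᵥ A *ᵥ u = ∑ i, ∑ j, u i * u j * A i j := by
  simp only [dotProduct, mulVec, Finset.mul_sum]
  exact Finset.sum_congr rfl fun i _ => Finset.sum_congr rfl fun j _ => by ring

lemma dotProduct_transpose_mul_diagonal_mul_mulVec [CommSemiring R] [DecidableEq ι]
    (B : Matrix ι ι R) (w u : ι → R) :
    u ⬝ᵥ (Bᵀ * diagonal w * B) *ᵥ u = ∑ i, w i * (B *ᵥ u) i ^ 2 := by
  rw [← mulVec_mulVec, ← mulVec_mulVec, dotProduct_mulVec, vecMul_transpose]
  simp only [dotProduct, mulVec_diagonal]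
  exact Finset.sum_congr rfl fun i _ => by ring

lemma det_of_ite_snd_eq [DecidableEq ι] [Fintype κ] [DecidableEq κ] [CommRing R]
    (A : Matrix ι ι R) :
    (of fun p q : ι × κ => if p.2 = q.2 then A p.1 q.1 else 0).det = A.det ^ Fintype.card κ := by
  have : (of fun p q : ι × κ => if p.2 = q.2 then A p.1 q.1 else 0) = A ⊗ₖ (1 : Matrix κ κ R) := by
    ext p q
    simp [kroneckerMap_apply, one_apply]
  rw [this, det_kronecker, det_one, one_pow, mul_one]

def tailSumMatrix (ι R : Type*) [LinearOrder ι] [Zero R] [One R] : Matrix ι ι R :=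
  of fun i j => if i ≤ j then 1 else 0

lemma tailSumMatrix_mulVec [LinearOrder ι] [NonAssocSemiring R] (u : ι → R) (i : ι) :
    (tailSumMatrix ι R *ᵥ u) i = ∑ j ∈ univ.filter (fun j => i ≤ j), u j := by
  simp [tailSumMatrix, mulVec, dotProduct, Finset.sum_filter]

lemma det_tailSumMatrix [LinearOrder ι] [CommRing R] : (tailSumMatrix ι R).det = 1 := by
  have : (tailSumMatrix ι R).IsUpperTriangular := fun i j hij => if_neg (not_le.mpr hij)
  rw [det_of_isUpperTriangular this]
  simp [tailSumMatrix]

lemma prod_le_det_of_tailSum_quadForm_le [LinearOrder ι] {K : Matrix ι ι ℝ} (hK : K.IsHermitian)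
    {w : ι → ℝ} (hw : ∀ i, 0 < w i)
    (h : ∀ u, u ⬝ᵥ ((tailSumMatrix ι ℝ)ᵀ * diagonal w * tailSumMatrix ι ℝ) *ᵥ u ≤ u ⬝ᵥ K *ᵥ u) :
    ∏ i, w i ≤ K.det := by
  set T := tailSumMatrix ι ℝ
  have hT : IsUnit T := (isUnit_iff_isUnit_det T).mpr (by simp [T, det_tailSumMatrix])
  have hN : (Tᵀ * diagonal w * T).PosDef := by
    simpa [conjTranspose_eq_transpose_of_trivial] using
      (PosDef.diagonal hw).conjTranspose_mul_mul_same (mulVec_injective_iff_isUnit.mpr hT)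
  simpa only [T, det_mul, det_transpose, det_tailSumMatrix, det_diagonal, one_mul, mul_one]
    using det_le_det_of_posSemidef_sub hN (posSemidef_sub_of_dotProduct_mulVec_le hK hN.1 h)

end Matrix

lemma tailSum_quadForm_le_of_forall_vector {E ι : Type*} [NormedAddCommGroup E]
    [InnerProductSpace ℝ E] [Fintype ι] [LinearOrder ι] {e : E} (he : ‖e‖ = 1) (c : ℝ)
    (w : ι → ℝ) (A : Matrix ι ι ℝ)
    (h : ∀ ξ : ι → E, c * ∑ i, ‖∑ j ∈ univ.filter (fun j => i ≤ j), ξ j‖ ^ 2 * w i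
      ≤ ∑ i, ∑ j, inner ℝ (ξ i) (ξ j) * A i j) (u : ι → ℝ) :
    u ⬝ᵥ ((tailSumMatrix ι ℝ)ᵀ * diagonal (c • w) * tailSumMatrix ι ℝ) *ᵥ u ≤ u ⬝ᵥ A *ᵥ u := by
  have hnorm (S : Finset ι) : ‖∑ j ∈ S, u j • e‖ ^ 2 = (∑ j ∈ S, u j) ^ 2 := by
    rw [← Finset.sum_smul, norm_smul, he, mul_one, Real.norm_eq_abs, sq_abs]
  have hinner (i j : ι) : inner ℝ (u i • e) (u j • e) = u i * u j := by
    rw [real_inner_smul_left, real_inner_smul_right, real_inner_self_eq_norm_sq, he]; ring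
  have := h fun i => u i • e
  simp only [hnorm, hinner, Finset.mul_sum] at this
  rw [dotProduct_transpose_mul_diagonal_mul_mulVec, dotProduct_mulVec_self_eq_sum]
  simp only [tailSumMatrix_mulVec, Pi.smul_apply, smul_eq_mul]
  convert this using 2 with i
  ring

/-- `s i - s (i - 1)`, with the convention `s (-1) = 0`. -/
def spacing {k : ℕ} (s : Fin k → ℝ) (i : Fin k) : ℝ :=
  s i - (if _h : (i : ℕ) = 0 then 0 else s ⟨(i : ℕ) - 1, lt_of_le_of_lt (Nat.sub_le _ _) i.isLt⟩)

lemma spacing_pos {k : ℕ} {s : Fin k → ℝ} (hs : StrictMono s) (hpos : ∀ i, 0 < s i)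
    (i : Fin k) : 0 < spacing s i := by
  unfold spacing
  split_ifs with h
  · simpa using hpos i
  · exact sub_pos.mpr (hs (Fin.lt_def.mpr (Nat.sub_lt (Nat.pos_of_ne_zero h) one_pos)))

lemma mul_rpow_pow_rpow_neg_half {a b : ℝ} (ha : 0 < a) (hb : 0 < b) (H : ℝ) (d : ℕ) :
    ((a * b ^ (2 * H)) ^ d) ^ (-(1 : ℝ) / 2) = a ^ (-(d : ℝ) / 2) * b ^ (-(H * d)) := by
  rw [← Real.rpow_natCast, ← Real.rpow_mul (by positivity),
    Real.mul_rpow ha.le (by positivity), ← Real.rpow_mul hb.le]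
  ring_nf

theorem stmt_14_general (d : ℕ) (hd : 1 ≤ d) (H : ℝ)
    (kH : ℝ) (hkH : 0 < kH)
    (R : ℝ → ℝ → ℝ)
    (hR : ∀ u v : ℝ, R u v = (u ^ (2 * H) + v ^ (2 * H) - |u - v| ^ (2 * H)) / 2)
    -- local nondeterminism property of the fBm, expressed through the covariance R
    (hLND : ∀ (k : ℕ) (s : Fin k → ℝ), StrictMono s → (∀ i, 0 < s i) →
      ∀ ξ : Fin k → EuclideanSpace ℝ (Fin d),
        kH * ∑ i, ‖∑ j ∈ Finset.univ.filter (fun j => i ≤ j), ξ j‖ ^ 2 *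
            (s i - (if h : (i : ℕ) = 0 then 0
              else s ⟨(i : ℕ) - 1, lt_of_le_of_lt (Nat.sub_le _ _) i.isLt⟩)) ^ (2 * H)
          ≤ ∑ i, ∑ j, (inner ℝ (ξ i) (ξ j) : ℝ) * R (s i) (s j)) :
    ∃ c : ℝ, 0 < c ∧ ∀ (k : ℕ) (s : Fin k → ℝ), StrictMono s → (∀ i, 0 < s i) →
      (Matrix.det (Matrix.of fun p q : Fin k × Fin d =>
          if p.2 = q.2 then R (s p.1) (s q.1) else 0)) ^ (-(1:ℝ) / 2)
        ≤ c ^ k * ∏ i, (s i - (if h : (i : ℕ) = 0 then 0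
            else s ⟨(i : ℕ) - 1, lt_of_le_of_lt (Nat.sub_le _ _) i.isLt⟩)) ^ (-(H * d)) := by
  refine ⟨kH ^ (-(d : ℝ) / 2), by positivity, fun k s hs hpos => ?_⟩
  set K : Matrix (Fin k) (Fin k) ℝ := of fun i j => R (s i) (s j)
  set w : Fin k → ℝ := fun i => spacing s i ^ (2 * H)
  have hw : ∀ i, 0 < (kH • w) i := fun i =>
    mul_pos hkH (Real.rpow_pos_of_pos (spacing_pos hs hpos i) _)
  have hK : K.IsHermitian := isHermitian_iff_isSymm.mpr <| IsSymm.ext fun i j => by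
    simp only [K, of_apply, hR, abs_sub_comm]; ring
  have hdet : ∏ i, (kH • w) i ≤ K.det :=
    prod_le_det_of_tailSum_quadForm_le hK hw <|
      tailSum_quadForm_le_of_forall_vector (e := EuclideanSpace.single (⟨0, hd⟩ : Fin d) 1)
        (by simp) kH w K (hLND k s hs hpos)
  have hprod : 0 < ∏ i, (kH • w) i := prod_pos fun i _ => hw i
  have hM : (of fun p q : Fin k × Fin d => if p.2 = q.2 then R (s p.1) (s q.1) else 0).det
      = K.det ^ d := (det_of_ite_snd_eq K).trans (by rw [Fintype.card_fin])
  rw [hM]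
  calc (K.det ^ d) ^ (-(1 : ℝ) / 2)
      ≤ ((∏ i, (kH • w) i) ^ d) ^ (-(1 : ℝ) / 2) :=
        Real.rpow_le_rpow_of_nonpos (by positivity) (pow_le_pow_left₀ hprod.le hdet d)
          (by norm_num)
    _ = ∏ i, kH ^ (-(d : ℝ) / 2) * spacing s i ^ (-(H * d)) := by
        rw [← prod_pow, ← Real.finsetProd_rpow _ _ fun i _ => pow_nonneg (hw i).le d]
        exact prod_congr rfl fun i _ => mul_rpow_pow_rpow_neg_half hkH (spacing_pos hs hpos i) H d
    _ = _ := by rw [prod_mul_distrib, prod_const, card_fin]; rfl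

theorem stmt_14 (d : ℕ) (hd : 1 ≤ d) (H : ℝ) (hH0 : 0 < H) (hH1 : H < 1)
    (kH : ℝ) (hkH : 0 < kH)
    (R : ℝ → ℝ → ℝ)
    (hR : ∀ u v : ℝ, R u v = (u ^ (2 * H) + v ^ (2 * H) - |u - v| ^ (2 * H)) / 2)
    -- local nondeterminism property of the fBm, expressed through the covariance R
    (hLND : ∀ (k : ℕ) (s : Fin k → ℝ), StrictMono s → (∀ i, 0 < s i) →
      ∀ ξ : Fin k → EuclideanSpace ℝ (Fin d),
        kH * ∑ i, ‖∑ j ∈ Finset.univ.filter (fun j => i ≤ j), ξ j‖ ^ 2 *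
            (s i - (if h : (i : ℕ) = 0 then 0
              else s ⟨(i : ℕ) - 1, lt_of_le_of_lt (Nat.sub_le _ _) i.isLt⟩)) ^ (2 * H)
          ≤ ∑ i, ∑ j, (inner ℝ (ξ i) (ξ j) : ℝ) * R (s i) (s j)) :
    ∃ c : ℝ, 0 < c ∧ ∀ (k : ℕ) (s : Fin k → ℝ), StrictMono s → (∀ i, 0 < s i) →
      (Matrix.det (Matrix.of fun p q : Fin k × Fin d =>
          if p.2 = q.2 then R (s p.1) (s q.1) else 0)) ^ (-(1:ℝ) / 2)
        ≤ c ^ k * ∏ i, (s i - (if h : (i : ℕ) = 0 then 0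
            else s ⟨(i : ℕ) - 1, lt_of_le_of_lt (Nat.sub_le _ _) i.isLt⟩)) ^ (-(H * d)) :=
  stmt_14_general d hd H kH hkH R hR hLND
end
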